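/- Let Q = [u₁,...,uₙ] (n ≥ 5) be a simple spherical polygon whose vertices are in general position and balanced, and let u_i be a vertex of Q that is both good and nonessential. Then the number of spherical inflections of Q is greater than or equal to the number of spherical inflections of the spherical polygon Q − u_i. -/

import Mathlib

open scoped RealInnerProductSpace

noncomputable section

/-- ℝ³ as EuclideanSpace. -/
abbrev E3 : Type := EuclideanSpace ℝ (Fin 3)

/-- Determinant of the 3×3 matrix with columns u, v, w. -/
def det3 (u v w : E3) : ℝ :=
  Matrix.det !![u 0, v 0, w 0; u 1, v 1, w 1; u 2, v 2, w 2]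

/-- The minimizing great-circle arc joining two non-antipodal points of S². -/
def sphericalEdge (u v : E3) : Set E3 :=
  {p | ∃ a b : ℝ, 0 ≤ a ∧ 0 ≤ b ∧ (a ≠ 0 ∨ b ≠ 0) ∧
    p = ‖a • u + b • v‖⁻¹ • (a • u + b • v)}

/-- A spherical polygon: a cyclic sequence of distinct points of S² with consecutive
vertices non-antipodal. -/
def IsSphericalPolygon {n : ℕ} (u : ZMod n → E3) : Prop :=
  (∀ i, ‖u i‖ = 1) ∧ Function.Injective u ∧ (∀ i, u (i + 1) ≠ -(u i))

/-- The i-th edge of a spherical polygon. -/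
def polyEdge {n : ℕ} (u : ZMod n → E3) (i : ZMod n) : Set E3 :=
  sphericalEdge (u i) (u (i + 1))

/-- A spherical polygon is simple if non-adjacent edges are disjoint and adjacent
edges meet only in their common vertex. -/
def IsSimple {n : ℕ} (u : ZMod n → E3) : Prop :=
  (∀ i j : ZMod n, j ≠ i → j ≠ i + 1 → i ≠ j + 1 →
      Disjoint (polyEdge u i) (polyEdge u j)) ∧
  (∀ i : ZMod n, polyEdge u i ∩ polyEdge u (i + 1) = {u (i + 1)})

/-- A family of points of S² is balanced if it is not contained in any closed
hemisphere. -/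
def IsBalanced {ι : Type*} (u : ι → E3) : Prop :=
  ∀ w : E3, w ≠ 0 → ∃ i, ⟪u i, w⟫ < 0

/-- Points in general position: no three on a common great circle. -/
def GeneralPosition {ι : Type*} (u : ι → E3) : Prop :=
  ∀ i j k : ι, i ≠ j → i ≠ k → j ≠ k → det3 (u i) (u j) (u k) ≠ 0

/-- Spherical inflection of a spherical polygon at index i. -/
def Inflection {n : ℕ} (u : ZMod n → E3) (i : ZMod n) : Prop :=
  det3 (u (i - 1)) (u i) (u (i + 1)) * det3 (u i) (u (i + 1)) (u (i + 2)) < 0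

/-- The polygon Q − uᵢ obtained by deleting the vertex uᵢ, reindexed over ZMod (n-1),
starting at u_{i+1}. -/
def eraseVertex {n : ℕ} (u : ZMod n → E3) (i : ZMod n) : ZMod (n - 1) → E3 :=
  fun j => u (i + 1 + (j.val : ZMod n))

/-- The open cone spanned by three vectors. -/
def openCone3 (a b c : E3) : Set E3 :=
  {x | ∃ l₁ l₂ l₃ : ℝ, 0 < l₁ ∧ 0 < l₂ ∧ 0 < l₃ ∧ x = l₁ • a + l₂ • b + l₃ • c}

end

/-!
Write `q, r, s` for `u (i - 1), u i, u (i + 1)`. Away from the turns at `i - 2, …, i + 1` the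
inflections of `Q` and `Q − u i` correspond, so only the sign changes of the turn orientations in
this window need comparing. Suppose `u (i - 2)` turns the same way as `Q` does at `i`, but the
turn at `u (i - 1)` flips when `u i` is deleted. Then either the edge `[u (i - 2), q]` crosses
`[r, s]`, contradicting simplicity of `Q`, or `u (i - 2)` lies in the open cone over `q, r, s`.
In the latter case the path `u (i + 2), …, u (i - 2)` never leaves that cone, since its edges
avoid `[q, r]`, `[r, s]` (`Q` is simple) and `[q, s]` (`Q − u i` is simple); so all vertices lie
in a closed hemisphere, contradicting balance. The same holds for `u (i + 2)`, and a finite check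
of sign patterns finishes the count.
-/
lemma det3_apply (u v w : E3) : det3 u v w =
    u 0 * (v 1 * w 2 - v 2 * w 1) - v 0 * (u 1 * w 2 - u 2 * w 1)
      + w 0 * (u 1 * v 2 - u 2 * v 1) := by
  simp only [det3, Matrix.det_fin_three, Matrix.of_apply, Matrix.cons_val', Matrix.cons_val_zero,
    Matrix.cons_val_fin_one, Matrix.cons_val_one, Matrix.cons_val]
  ring

lemma det3_rotate (u v w : E3) : det3 u v w = det3 v w u := by
  simp only [det3_apply]; ring

lemma det3_swap_left (u v w : E3) : det3 u v w = -det3 v u w := by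
  simp only [det3_apply]; ring

/-- The coordinates of `x` in the basis `q, r, s`, multiplied by `(det3 q r s)²` so that no
division occurs: they have the signs of the true coordinates whenever `det3 q r s ≠ 0`. -/
def coneCoords (q r s x : E3) : Fin 3 → ℝ :=
  det3 q r s • ![det3 x r s, det3 q x s, det3 q r x]

@[simp] lemma coneCoords_zero (q r s x : E3) : coneCoords q r s x 0 = det3 q r s * det3 x r s :=
  rfl

@[simp] lemma coneCoords_one (q r s x : E3) : coneCoords q r s x 1 = det3 q r s * det3 q x s :=
  rfl

@[simp] lemma coneCoords_two (q r s x : E3) : coneCoords q r s x 2 = det3 q r s * det3 q r x :=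
  rfl

lemma coneCoords_smul_add (q r s x y : E3) (a : ℝ) :
    coneCoords q r s (a • x + y) = a • coneCoords q r s x + coneCoords q r s y := by
  ext k; fin_cases k <;> simp [coneCoords, det3_apply] <;> ring

lemma coneCoords_linearCombination (q r s : E3) (a b c : ℝ) :
    coneCoords q r s (a • q + b • r + c • s) = (det3 q r s ^ 2) • ![a, b, c] := by
  ext k; fin_cases k <;> simp [coneCoords, det3_apply] <;> ring

lemma sq_det3_smul_eq (q r s x : E3) :
    det3 q r s ^ 2 • x =
      coneCoords q r s x 0 • q + coneCoords q r s x 1 • r + coneCoords q r s x 2 • s := by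
  ext j; fin_cases j <;> simp [coneCoords, det3_apply] <;> ring

lemma mem_openCone3_iff {q r s x : E3} (hd : det3 q r s ≠ 0) :
    x ∈ openCone3 q r s ↔ ∀ k, 0 < coneCoords q r s x k := by
  have hd2 : 0 < det3 q r s ^ 2 := by positivity
  constructor
  · rintro ⟨a, b, c, ha, hb, hc, rfl⟩ k
    rw [coneCoords_linearCombination]
    fin_cases k <;> simp <;> positivity
  · intro hx
    refine ⟨_, _, _, div_pos (hx 0) hd2, div_pos (hx 1) hd2, div_pos (hx 2) hd2, ?_⟩
    calc x = (det3 q r s ^ 2)⁻¹ • (det3 q r s ^ 2 • x) := (inv_smul_smul₀ hd2.ne' x).symm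
      _ = _ := by rw [sq_det3_smul_eq]; simp only [smul_add, smul_smul, div_eq_inv_mul]

lemma sphericalEdge_comm (u v : E3) : sphericalEdge u v = sphericalEdge v u := by
  ext p
  constructor <;> rintro ⟨a, b, ha, hb, hab, rfl⟩ <;>
    exact ⟨b, a, hb, ha, hab.symm, by rw [add_comm]⟩

lemma openCone3_rotate (q r s : E3) : openCone3 q r s = openCone3 r s q := by
  ext x
  constructor <;> rintro ⟨a, b, c, ha, hb, hc, rfl⟩
  · exact ⟨b, c, a, hb, hc, ha, by abel⟩
  · exact ⟨c, a, b, hc, ha, hb, by abel⟩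

lemma exists_pos_mul_add_nonneg_eq_zero {ι : Type*} [Finite ι] {X Y : ι → ℝ}
    (hX : ∀ k, 0 < X k) (hY : ∃ k, Y k < 0) :
    ∃ a > 0, (∀ k, 0 ≤ a * X k + Y k) ∧ ∃ k, a * X k + Y k = 0 := by
  obtain ⟨k₁, hk₁⟩ := hY
  have : Nonempty ι := ⟨k₁⟩
  obtain ⟨k₀, hmax⟩ := Finite.exists_max fun k => -Y k / X k
  refine ⟨-Y k₀ / X k₀, (div_pos (by linarith) (hX k₁)).trans_le (hmax k₁), fun k => ?_,
    k₀, by field_simp [(hX k₀).ne']; ring⟩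
  have := (div_le_iff₀ (hX k)).mp (hmax k)
  linarith

lemma inv_norm_smul_mem_sphericalEdge {u v z : E3} {a b c : ℝ} (hz : z ≠ 0) (hc : 0 < c)
    (ha : 0 ≤ a) (hb : 0 ≤ b) (h : c • z = a • u + b • v) :
    ‖z‖⁻¹ • z ∈ sphericalEdge u v := by
  have hz' : z = (a / c) • u + (b / c) • v := by
    rw [div_eq_inv_mul, div_eq_inv_mul, ← smul_smul, ← smul_smul, ← smul_add, ← h,
      inv_smul_smul₀ hc.ne']
  subst hz'
  refine ⟨a / c, b / c, by positivity, by positivity, ?_, rfl⟩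
  by_contra! h0
  simp [h0] at hz

lemma not_disjoint_sphericalEdge_of_eq {u v x y : E3} {a b c e : ℝ} (ha : 0 ≤ a) (hb : 0 ≤ b)
    (hc : 0 ≤ c) (he : 0 ≤ e) (hne : a • u + b • v ≠ 0) (h : a • u + b • v = c • x + e • y) :
    ¬Disjoint (sphericalEdge u v) (sphericalEdge x y) :=
  Set.not_disjoint_iff.mpr ⟨_, inv_norm_smul_mem_sphericalEdge hne one_pos ha hb (one_smul _ _),
    inv_norm_smul_mem_sphericalEdge hne one_pos hc he (by rw [one_smul, h])⟩

lemma inv_norm_smul_mem_edges_of_coneCoords_eq_zero {q r s z : E3} (hd : det3 q r s ≠ 0)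
    (hz : z ≠ 0) (hnn : ∀ k, 0 ≤ coneCoords q r s z k) {k₀ : Fin 3}
    (h₀ : coneCoords q r s z k₀ = 0) :
    ‖z‖⁻¹ • z ∈ sphericalEdge r s ∪ sphericalEdge q s ∪ sphericalEdge q r := by
  have hd2 : 0 < det3 q r s ^ 2 := by positivity
  have key := sq_det3_smul_eq q r s z
  obtain rfl | rfl | rfl : k₀ = 0 ∨ k₀ = 1 ∨ k₀ = 2 := by fin_cases k₀ <;> simp
  · refine Or.inl (Or.inl (inv_norm_smul_mem_sphericalEdge hz hd2 (hnn 1) (hnn 2) ?_))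
    rw [key, h₀, zero_smul, zero_add]
  · refine Or.inl (Or.inr (inv_norm_smul_mem_sphericalEdge hz hd2 (hnn 0) (hnn 2) ?_))
    rw [key, h₀, zero_smul, add_zero]
  · refine Or.inr (inv_norm_smul_mem_sphericalEdge hz hd2 (hnn 0) (hnn 1) ?_)
    rw [key, h₀, zero_smul, add_zero]

/-- An edge `[x, y]` avoiding the boundary of the cone over the triangle `q r s` cannot leave
the cone: at its exit point one cone coordinate vanishes, which puts that point on a side. -/
lemma mem_openCone3_of_disjoint {q r s x y : E3} (hd : det3 q r s ≠ 0)
    (hx : x ∈ openCone3 q r s) (hy : ∀ k, coneCoords q r s y k ≠ 0)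
    (hxn : ‖x‖ = 1) (hyn : ‖y‖ = 1) (hxy : y ≠ -x)
    (hrs : Disjoint (sphericalEdge x y) (sphericalEdge r s))
    (hqs : Disjoint (sphericalEdge x y) (sphericalEdge q s))
    (hqr : Disjoint (sphericalEdge x y) (sphericalEdge q r)) :
    y ∈ openCone3 q r s := by
  rw [mem_openCone3_iff hd] at hx ⊢
  by_contra! hneg
  obtain ⟨k, hk⟩ := hneg
  obtain ⟨a, ha, hnn, k₀, h₀⟩ :=
    exists_pos_mul_add_nonneg_eq_zero hx ⟨k, hk.lt_of_ne (hy k)⟩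
  have hz : a • x + y ≠ 0 := by
    intro h
    have hy' : y = -(a • x) := eq_neg_of_add_eq_zero_right h
    have ha1 : a = 1 := by simpa [hy', norm_smul, hxn, abs_of_pos ha] using hyn
    exact hxy (by rw [hy', ha1, one_smul])
  have hcoords : ∀ k, coneCoords q r s (a • x + y) k =
      a * coneCoords q r s x k + coneCoords q r s y k := by
    simp [coneCoords_smul_add]
  have hedge := inv_norm_smul_mem_edges_of_coneCoords_eq_zero hd hz (k₀ := k₀)
    (fun k => (hcoords k).symm ▸ hnn k) ((hcoords k₀).symm ▸ h₀)
  have hxy' : ‖a • x + y‖⁻¹ • (a • x + y) ∈ sphericalEdge x y :=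
    inv_norm_smul_mem_sphericalEdge hz one_pos ha.le zero_le_one (by rw [one_smul, one_smul])
  rcases hedge with (h | h) | h
  exacts [hrs.notMem_of_mem_left hxy' h, hqs.notMem_of_mem_left hxy' h,
    hqr.notMem_of_mem_left hxy' h]

/-- The witness is `(r × s + s × q + q × r) / det3 q r s`; the cross product sum is normal to
the affine plane through `q, r, s`. -/
lemma exists_inner_eq_one {q r s : E3} (hd : det3 q r s ≠ 0) :
    ∃ w : E3, ⟪q, w⟫ = 1 ∧ ⟪r, w⟫ = 1 ∧ ⟪s, w⟫ = 1 := by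
  let n : E3 := WithLp.toLp 2 (crossProduct r.ofLp s.ofLp + crossProduct s.ofLp q.ofLp +
    crossProduct q.ofLp r.ofLp)
  have hn : ∀ x : E3, ⟪x, n⟫ = det3 x r s + det3 q x s + det3 q r x := fun x => by
    simp only [n, cross_apply, Matrix.add_cons, Matrix.head_cons, Matrix.tail_cons,
      Matrix.empty_add_empty, PiLp.inner_apply, RCLike.inner_apply, Real.ringHom_apply,
      Fin.sum_univ_three, Matrix.cons_val_zero, Matrix.cons_val_one, Matrix.cons_val, det3_apply]
    ring
  refine ⟨(det3 q r s)⁻¹ • n, ?_, ?_, ?_⟩ <;>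
  · rw [real_inner_smul_right, hn, ← inv_mul_cancel₀ hd]
    congr 1
    simp only [det3_apply]
    ring

lemma not_isBalanced_of_forall_mem_cone {ι : Type*} {x : ι → E3} {q r s : E3}
    (hd : det3 q r s ≠ 0) (h : ∀ k, x k ∈ openCone3 q r s ∨ x k = q ∨ x k = r ∨ x k = s) :
    ¬IsBalanced x := by
  obtain ⟨w, hq, hr, hs⟩ := exists_inner_eq_one hd
  intro hbal
  obtain ⟨k, hk⟩ := hbal w (by rintro rfl; simp at hq)
  rcases h k with ⟨a, b, c, ha, hb, hc, hx⟩ | hx | hx | hx <;>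
    simp only [hx, inner_add_left, real_inner_smul_left, hq, hr, hs] at hk <;> linarith

lemma mem_openCone3_or_not_disjoint {q r s p : E3} (hd : det3 q r s ≠ 0)
    (h₀ : coneCoords q r s p 0 ≠ 0) (h₁ : 0 < coneCoords q r s p 1)
    (h₂ : 0 < coneCoords q r s p 2) :
    p ∈ openCone3 q r s ∨ ¬Disjoint (sphericalEdge p q) (sphericalEdge r s) := by
  rcases h₀.lt_or_gt with hneg | hpos
  · right
    have hne : coneCoords q r s p 1 • r + coneCoords q r s p 2 • s ≠ 0 := by
      intro h0
      have hdet : ∀ a b : ℝ, det3 q (a • r + b • s) s = a * det3 q r s := fun a b => by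
        simp only [det3_apply, PiLp.add_apply, PiLp.smul_apply, smul_eq_mul]; ring
      have := hdet (coneCoords q r s p 1) (coneCoords q r s p 2)
      rw [h0, show det3 q 0 s = 0 by simp [det3_apply]] at this
      exact mul_ne_zero h₁.ne' hd this.symm
    have key : det3 q r s ^ 2 • p + (-coneCoords q r s p 0) • q =
        coneCoords q r s p 1 • r + coneCoords q r s p 2 • s := by
      rw [sq_det3_smul_eq, neg_smul]; abel
    exact not_disjoint_sphericalEdge_of_eq (sq_nonneg _) (neg_nonneg.mpr hneg.le) h₁.le h₂.le
      (key ▸ hne) key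
  · exact Or.inl ((mem_openCone3_iff hd).mpr fun k => by fin_cases k <;> assumption)

lemma Int.iff_of_forall_iff_add_one {P : ℤ → Prop} {lo hi : ℤ}
    (h : ∀ k, lo ≤ k → k < hi → (P k ↔ P (k + 1))) {a b : ℤ} (ha : lo ≤ a ∧ a ≤ hi)
    (hb : lo ≤ b ∧ b ≤ hi) : P a ↔ P b := by
  suffices key : ∀ k, lo ≤ k → k ≤ hi → (P lo ↔ P k) by
    exact (key a ha.1 ha.2).symm.trans (key b hb.1 hb.2)
  intro k hk
  induction k, hk using Int.leInduction with
  | base => exact fun _ => Iff.rfl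
  | succ k hk ih => exact fun hk' => (ih (by omega)).trans (h k hk (by omega))

lemma ZMod.add_intCast_ne {n : ℕ} (i : ZMod n) {a b : ℤ} (h : a ≠ b) (h₁ : a - b < n)
    (h₂ : b - a < n) : i + (a : ZMod n) ≠ i + b := by
  rw [Ne, add_right_inj, ZMod.intCast_eq_intCast_iff_dvd_sub]
  intro hdvd
  have := Int.eq_zero_of_abs_lt_dvd hdvd (abs_lt.mpr ⟨by omega, by omega⟩)
  omega

section Polygon

variable {n : ℕ} (u : ZMod n → E3) (i : ZMod n)

/-- Integer offsets from `i` turn index arithmetic modulo `n` into linear arithmetic over `ℤ`. -/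
def relVertex (k : ℤ) : E3 := u (i + k)

lemma relVertex_add_period (k : ℤ) : relVertex u i (k + n) = relVertex u i k := by
  simp [relVertex]

lemma norm_relVertex (hpoly : IsSphericalPolygon u) (k : ℤ) : ‖relVertex u i k‖ = 1 :=
  hpoly.1 _

lemma relVertex_add_one_ne_neg (hpoly : IsSphericalPolygon u) (k : ℤ) :
    relVertex u i (k + 1) ≠ -relVertex u i k := by
  simpa [relVertex, add_assoc] using hpoly.2.2 (i + k)

lemma GeneralPosition.det3_relVertex_ne_zero {u : ZMod n → E3} (hgp : GeneralPosition u)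
    {a b c : ℤ} (hab : a ≠ b) (hac : a ≠ c) (hbc : b ≠ c)
    (hspread : max (max a b) c - min (min a b) c < n) :
    det3 (relVertex u i a) (relVertex u i b) (relVertex u i c) ≠ 0 :=
  hgp _ _ _ (i.add_intCast_ne hab (by omega) (by omega))
    (i.add_intCast_ne hac (by omega) (by omega)) (i.add_intCast_ne hbc (by omega) (by omega))

lemma polyEdge_add_intCast (k : ℤ) :
    polyEdge u (i + k) = sphericalEdge (relVertex u i k) (relVertex u i (k + 1)) := by
  simp [polyEdge, relVertex, add_assoc]

lemma IsSimple.disjoint_relVertex {u : ZMod n → E3} (hs : IsSimple u) {a b : ℤ}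
    (h₁ : a + 2 ≤ b) (h₂ : b + 2 ≤ a + n) :
    Disjoint (sphericalEdge (relVertex u i a) (relVertex u i (a + 1)))
      (sphericalEdge (relVertex u i b) (relVertex u i (b + 1))) := by
  rw [← polyEdge_add_intCast, ← polyEdge_add_intCast]
  have hsucc : ∀ k : ℤ, i + (k : ZMod n) + 1 = i + ((k + 1 : ℤ) : ZMod n) := fun k => by
    push_cast; ring
  refine hs.1 _ _ (i.add_intCast_ne ?_ ?_ ?_) ?_ ?_ <;> try omega
  · rw [hsucc]; exact i.add_intCast_ne (by omega) (by omega) (by omega)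
  · rw [hsucc]; exact i.add_intCast_ne (by omega) (by omega) (by omega)

lemma relVertex_eraseVertex_of_nonneg {k : ℤ} (hk₀ : 0 ≤ k) (hk : k + 1 < n) :
    relVertex (eraseVertex u i) 0 k = relVertex u i (k + 1) := by
  have : NeZero (n - 1) := ⟨by omega⟩
  have hval : (((k : ZMod (n - 1)).val : ℕ) : ℤ) = k := by
    rw [ZMod.val_intCast, Int.emod_eq_of_lt hk₀ (by omega)]
  simp only [relVertex, eraseVertex, zero_add]
  congr 1
  rw [← Int.cast_natCast, hval]
  push_cast; ring

lemma relVertex_eraseVertex_of_neg {k : ℤ} (hk₀ : k < 0) (hk : 0 < k + n) :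
    relVertex (eraseVertex u i) 0 k = relVertex u i k := by
  have hn : (((n - 1 : ℕ)) : ℤ) = n - 1 := by omega
  rw [← relVertex_add_period, relVertex_eraseVertex_of_nonneg u i (by omega) (by omega), hn,
    ← relVertex_add_period u i k]
  ring_nf

lemma disjoint_relVertex_of_isSimple_eraseVertex (hgood : IsSimple (eraseVertex u i)) {a : ℤ}
    (h₁ : 2 ≤ a) (h₂ : a + 3 ≤ n) :
    Disjoint (sphericalEdge (relVertex u i a) (relVertex u i (a + 1)))
      (sphericalEdge (relVertex u i (-1)) (relVertex u i 1)) := by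
  have h := hgood.disjoint_relVertex 0 (a := a - 1) (b := n - 2) (by omega) (by omega)
  have e₁ : relVertex (eraseVertex u i) 0 (a - 1) = relVertex u i a := by
    rw [relVertex_eraseVertex_of_nonneg u i (by omega) (by omega), sub_add_cancel]
  have e₂ : relVertex (eraseVertex u i) 0 (a - 1 + 1) = relVertex u i (a + 1) := by
    rw [relVertex_eraseVertex_of_nonneg u i (by omega) (by omega), sub_add_cancel]
  have e₃ : relVertex (eraseVertex u i) 0 (n - 2) = relVertex u i (-1) := by
    rw [relVertex_eraseVertex_of_nonneg u i (by omega) (by omega),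
      show (n : ℤ) - 2 + 1 = -1 + n by ring, relVertex_add_period]
  have e₄ : relVertex (eraseVertex u i) 0 (n - 2 + 1) = relVertex u i 1 := by
    rw [show (n : ℤ) - 2 + 1 = 0 + ↑(n - 1 : ℕ) by omega, relVertex_add_period,
      relVertex_eraseVertex_of_nonneg u i le_rfl (by omega), zero_add]
  rwa [e₁, e₂, e₃, e₄] at h

theorem relVertex_notMem_openCone3 (hn : 4 ≤ n) (hpoly : IsSphericalPolygon u)
    (hsimple : IsSimple u) (hgp : GeneralPosition u) (hbal : IsBalanced u)
    (hgood : IsSimple (eraseVertex u i)) {a : ℤ} (h₁ : 2 ≤ a) (h₂ : a + 2 ≤ n) :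
    relVertex u i a ∉ openCone3 (relVertex u i (-1)) (relVertex u i 0) (relVertex u i 1) := by
  have : NeZero n := ⟨by omega⟩
  set w := relVertex u i
  set C := openCone3 (w (-1)) (w 0) (w 1)
  have hd : det3 (w (-1)) (w 0) (w 1) ≠ 0 :=
    hgp.det3_relVertex_ne_zero i (by omega) (by omega) (by omega) (by omega)
  have hcoords : ∀ b : ℤ, 2 ≤ b → b + 2 ≤ n →
      ∀ k, coneCoords (w (-1)) (w 0) (w 1) (w b) k ≠ 0 := by
    intro b hb hb' k
    fin_cases k <;> refine mul_ne_zero hd (hgp.det3_relVertex_ne_zero i ?_ ?_ ?_ ?_) <;> omega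
  have hstep : ∀ b : ℤ, 2 ≤ b → b < n - 2 → (w b ∈ C ↔ w (b + 1) ∈ C) := by
    intro b hb hb'
    have hqr := hsimple.disjoint_relVertex i (a := -1) (b := b) (by omega) (by omega)
    have hrs := hsimple.disjoint_relVertex i (a := 0) (b := b) (by omega) (by omega)
    have hqs := disjoint_relVertex_of_isSimple_eraseVertex u i hgood hb (by omega)
    norm_num at hqr hrs
    have hxy := relVertex_add_one_ne_neg u i hpoly b
    constructor
    · intro hx
      exact mem_openCone3_of_disjoint hd hx (hcoords _ (by omega) (by omega))
        (norm_relVertex u i hpoly _) (norm_relVertex u i hpoly _) hxy hrs.symm hqs hqr.symm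
    · intro hy
      rw [sphericalEdge_comm (relVertex u i b)] at hqr hrs hqs
      exact mem_openCone3_of_disjoint hd hy (hcoords _ (by omega) (by omega))
        (norm_relVertex u i hpoly _) (norm_relVertex u i hpoly _)
        (fun h => hxy (neg_eq_iff_eq_neg.mpr h).symm) hrs.symm hqs hqr.symm
  intro ha
  have hall : ∀ b : ℤ, 2 ≤ b → b + 2 ≤ n → w b ∈ C := fun b hb hb' =>
    (Int.iff_of_forall_iff_add_one hstep ⟨h₁, by omega⟩ ⟨hb, by omega⟩).mp ha
  refine not_isBalanced_of_forall_mem_cone hd (fun j => ?_) hbal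
  obtain ⟨b, hb₁, hb₂, hj⟩ : ∃ b : ℤ, -1 ≤ b ∧ b + 2 ≤ n ∧ w b = u j := by
    have := ZMod.val_lt (j - i + 1)
    refine ⟨((j - i + 1 : ZMod n).val : ℤ) - 1, by omega, by omega, ?_⟩
    simp [w, relVertex]
  rw [← hj]
  rcases (show b = -1 ∨ b = 0 ∨ b = 1 ∨ 2 ≤ b by omega) with rfl | rfl | rfl | hb
  · exact Or.inr (Or.inl rfl)
  · exact Or.inr (Or.inr (Or.inl rfl))
  · exact Or.inr (Or.inr (Or.inr rfl))
  · exact Or.inl (hall b hb hb₂)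

def relTurn (k : ℤ) : ℝ :=
  det3 (relVertex u i (k - 1)) (relVertex u i k) (relVertex u i (k + 1))

lemma GeneralPosition.relTurn_ne_zero {u : ZMod n → E3} (hgp : GeneralPosition u) (hn : 3 ≤ n)
    (k : ℤ) : relTurn u i k ≠ 0 :=
  hgp.det3_relVertex_ne_zero i (by omega) (by omega) (by omega) (by omega)

theorem det3_relVertex_mul_relTurn_pos_left (hn : 4 ≤ n) (hpoly : IsSphericalPolygon u)
    (hsimple : IsSimple u) (hgp : GeneralPosition u) (hbal : IsBalanced u)
    (hgood : IsSimple (eraseVertex u i)) (h : 0 < relTurn u i (-1) * relTurn u i 0) :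
    0 < det3 (relVertex u i (-2)) (relVertex u i (-1)) (relVertex u i 1) * relTurn u i 0 := by
  have hτ : relTurn u i (-1) = det3 (relVertex u i (-2)) (relVertex u i (-1)) (relVertex u i 0) ∧
      relTurn u i 0 = det3 (relVertex u i (-1)) (relVertex u i 0) (relVertex u i 1) := by
    norm_num [relTurn]
  rw [hτ.1, hτ.2] at h
  rw [hτ.2]
  set w := relVertex u i
  have hd : det3 (w (-1)) (w 0) (w 1) ≠ 0 :=
    hgp.det3_relVertex_ne_zero i (by omega) (by omega) (by omega) (by omega)
  by_contra! hb
  have hb' := lt_of_le_of_ne hb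
    (mul_ne_zero (hgp.det3_relVertex_ne_zero i (by omega) (by omega) (by omega)
      (by omega)) hd)
  have hcoords₀ : coneCoords (w (-1)) (w 0) (w 1) (w (-2)) 0 ≠ 0 := by
    rw [coneCoords_zero]
    exact mul_ne_zero hd (hgp.det3_relVertex_ne_zero i (by omega) (by omega) (by omega)
        (by omega))
  have hcoords₁ : 0 < coneCoords (w (-1)) (w 0) (w 1) (w (-2)) 1 := by
    rw [coneCoords_one, det3_swap_left (w (-1)) (w (-2))]; nlinarith
  have hcoords₂ : 0 < coneCoords (w (-1)) (w 0) (w 1) (w (-2)) 2 := by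
    rw [coneCoords_two, ← det3_rotate (w (-2))]; nlinarith
  rcases mem_openCone3_or_not_disjoint hd hcoords₀ hcoords₁ hcoords₂ with hp | hp
  · refine relVertex_notMem_openCone3 u i hn hpoly hsimple hgp hbal hgood (a := n - 2)
      (by omega) (by omega) ?_
    rwa [show (n : ℤ) - 2 = -2 + n by ring, relVertex_add_period]
  · have := hsimple.disjoint_relVertex i (a := -2) (b := 0) (by omega) (by omega)
    norm_num at this
    exact hp this

theorem det3_relVertex_mul_relTurn_pos_right (hn : 4 ≤ n) (hpoly : IsSphericalPolygon u)
    (hsimple : IsSimple u) (hgp : GeneralPosition u) (hbal : IsBalanced u)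
    (hgood : IsSimple (eraseVertex u i)) (h : 0 < relTurn u i 1 * relTurn u i 0) :
    0 < det3 (relVertex u i (-1)) (relVertex u i 1) (relVertex u i 2) * relTurn u i 0 := by
  have hτ : relTurn u i 1 = det3 (relVertex u i 0) (relVertex u i 1) (relVertex u i 2) ∧
      relTurn u i 0 = det3 (relVertex u i (-1)) (relVertex u i 0) (relVertex u i 1) := by
    norm_num [relTurn]
  rw [hτ.1, hτ.2] at h
  rw [hτ.2]
  set w := relVertex u i
  have hrot : det3 (w 1) (w (-1)) (w 0) = det3 (w (-1)) (w 0) (w 1) := by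
    rw [det3_rotate (w (-1)), det3_rotate (w 0)]
  have hd : det3 (w 1) (w (-1)) (w 0) ≠ 0 :=
    hrot ▸ hgp.det3_relVertex_ne_zero i (by omega) (by omega) (by omega) (by omega)
  by_contra! hb
  have hb' := lt_of_le_of_ne hb
    (mul_ne_zero (hgp.det3_relVertex_ne_zero i (by omega) (by omega) (by omega)
      (by omega)) (hrot ▸ hd))
  have hcoords₀ : coneCoords (w 1) (w (-1)) (w 0) (w 2) 0 ≠ 0 := by
    rw [coneCoords_zero]
    exact mul_ne_zero hd (hgp.det3_relVertex_ne_zero i (by omega) (by omega) (by omega)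
      (by omega))
  have hcoords₁ : 0 < coneCoords (w 1) (w (-1)) (w 0) (w 2) 1 := by
    rw [coneCoords_one, hrot, ← det3_rotate (w 0)]; nlinarith
  have hcoords₂ : 0 < coneCoords (w 1) (w (-1)) (w 0) (w 2) 2 := by
    rw [coneCoords_two, hrot, det3_swap_left (w 1) (w (-1))]; nlinarith
  rcases mem_openCone3_or_not_disjoint hd hcoords₀ hcoords₁ hcoords₂ with ht | ht
  · refine relVertex_notMem_openCone3 u i hn hpoly hsimple hgp hbal hgood (a := 2)
      le_rfl (by omega) ?_
    rwa [openCone3_rotate (w (-1)), openCone3_rotate (w 0)]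
  · have := hsimple.disjoint_relVertex i (a := -1) (b := 1) (by omega) (by omega)
    norm_num at this
    rw [sphericalEdge_comm (w 2)] at ht
    exact ht this.symm

end Polygon

open Finset

lemma ZMod.ncard_setOf_eq_sum_range {N : ℕ} [NeZero N] (P : ZMod N → Prop) [DecidablePred P]
    (c : ZMod N) : {j | P j}.ncard = ∑ m ∈ range N, if P (c + m) then 1 else 0 := by
  rw [Set.ncard_eq_toFinset_card', Set.toFinset_ofPred, card_filter]
  exact sum_nbij' (fun j => (j - c).val) (fun m : ℕ => c + m) (by simp [ZMod.val_lt]) (by simp)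
    (fun j _ => by simp) (fun m hm => by simp [ZMod.val_cast_of_lt (mem_range.mp hm)])
    (fun j _ => by simp)

noncomputable def signChange (x y : ℝ) : ℕ := if x * y < 0 then 1 else 0

section Count

variable {n : ℕ} (u : ZMod n → E3) (i : ZMod n)

lemma inflection_add_intCast_iff (k : ℤ) :
    Inflection u (i + k) ↔ relTurn u i k * relTurn u i (k + 1) < 0 := by
  simp only [Inflection, relTurn, relVertex]
  push_cast
  ring_nf

lemma ncard_inflection_eq_sum_range [NeZero n] (k₀ : ℤ) :
    {j | Inflection u j}.ncard =
      ∑ m ∈ range n, signChange (relTurn u i (m + k₀)) (relTurn u i (m + k₀ + 1)) := by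
  classical
  rw [ZMod.ncard_setOf_eq_sum_range _ (i + (k₀ : ZMod n))]
  refine sum_congr rfl fun m _ => ?_
  refine if_congr ?_ rfl rfl
  rw [← inflection_add_intCast_iff]
  push_cast
  ring_nf

lemma ncard_inflection_eq (hn : 4 ≤ n) :
    {j | Inflection u j}.ncard =
      ∑ m ∈ range (n - 4), signChange (relTurn u i (m + 2)) (relTurn u i (m + 3)) +
        (signChange (relTurn u i (-2)) (relTurn u i (-1)) +
          signChange (relTurn u i (-1)) (relTurn u i 0) +
          signChange (relTurn u i 0) (relTurn u i 1) +
          signChange (relTurn u i 1) (relTurn u i 2)) := by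
  have : NeZero n := ⟨by omega⟩
  rw [ncard_inflection_eq_sum_range u i (-2), show range n = range (n - 4 + 1 + 1 + 1 + 1) by
    congr 1; omega]
  simp only [sum_range_succ']
  push_cast
  ring_nf

lemma relTurn_eraseVertex_of_pos {k : ℤ} (h₁ : 1 ≤ k) (h₂ : k + 3 ≤ n) :
    relTurn (eraseVertex u i) 0 k = relTurn u i (k + 1) := by
  simp only [relTurn]
  rw [relVertex_eraseVertex_of_nonneg u i (by omega) (by omega),
    relVertex_eraseVertex_of_nonneg u i (by omega) (by omega),
    relVertex_eraseVertex_of_nonneg u i (by omega) (by omega)]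
  ring_nf

lemma ncard_inflection_eraseVertex_eq (hn : 4 ≤ n) :
    {j | Inflection (eraseVertex u i) j}.ncard =
      ∑ m ∈ range (n - 4), signChange (relTurn u i (m + 2)) (relTurn u i (m + 3)) +
        (signChange (relTurn u i (-2))
            (det3 (relVertex u i (-2)) (relVertex u i (-1)) (relVertex u i 1)) +
          signChange (det3 (relVertex u i (-2)) (relVertex u i (-1)) (relVertex u i 1))
            (det3 (relVertex u i (-1)) (relVertex u i 1) (relVertex u i 2)) +
          signChange (det3 (relVertex u i (-1)) (relVertex u i 1) (relVertex u i 2))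
            (relTurn u i 2)) := by
  have : NeZero (n - 1) := ⟨by omega⟩
  have hv : ∀ k : ℤ, -3 ≤ k → k < 0 → relVertex (eraseVertex u i) 0 k = relVertex u i k :=
    fun k hk hk' => relVertex_eraseVertex_of_neg u i hk' (by omega)
  have hv₀ : relVertex (eraseVertex u i) 0 0 = relVertex u i 1 :=
    relVertex_eraseVertex_of_nonneg u i le_rfl (by omega)
  have hv₁ : relVertex (eraseVertex u i) 0 1 = relVertex u i 2 :=
    relVertex_eraseVertex_of_nonneg u i zero_le_one (by omega)
  rw [ncard_inflection_eq_sum_range (eraseVertex u i) (0 : ZMod (n - 1)) (-2),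
    show range (n - 1) = range (n - 4 + 1 + 1 + 1) by congr 1; omega]
  have hshared : ∀ m ∈ range (n - 4),
      signChange (relTurn (eraseVertex u i) 0 (↑(m + 1 + 1 + 1) + -2))
        (relTurn (eraseVertex u i) 0 (↑(m + 1 + 1 + 1) + -2 + 1)) =
      signChange (relTurn u i (m + 2)) (relTurn u i (m + 3)) := fun m hm => by
    have := mem_range.mp hm
    rw [relTurn_eraseVertex_of_pos u i (by omega) (by omega),
      relTurn_eraseVertex_of_pos u i (by omega) (by omega)]
    push_cast
    ring_nf
  simp only [sum_range_succ']
  rw [sum_congr rfl hshared]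
  norm_num [relTurn_eraseVertex_of_pos u i le_rfl (by omega : (1 : ℤ) + 3 ≤ n)]
  norm_num [relTurn, hv, hv₀, hv₁]
  ring

end Count

lemma signChange_eq_toNat {x y : ℝ} (hx : x ≠ 0) (hy : y ≠ 0) :
    signChange x y = (decide (0 < x) != decide (0 < y)).toNat := by
  rcases hx.lt_or_gt with hx | hx <;> rcases hy.lt_or_gt with hy | hy <;>
    simp [signChange, mul_neg_iff, hx, hy, hx.not_gt, hy.not_gt]

lemma mul_pos_iff_decide_eq {x y : ℝ} (hx : x ≠ 0) (hy : y ≠ 0) :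
    0 < x * y ↔ decide (0 < x) = decide (0 < y) := by
  rcases hx.lt_or_gt with hx | hx <;> rcases hy.lt_or_gt with hy | hy <;>
    simp [mul_pos_iff, hx, hy, hx.not_gt, hy.not_gt]

lemma signChange_replace_le {A a₁ a₂ a₃ B b₁ b₂ : ℝ} (hA : A ≠ 0) (ha₁ : a₁ ≠ 0) (ha₂ : a₂ ≠ 0)
    (ha₃ : a₃ ≠ 0) (hB : B ≠ 0) (hb₁ : b₁ ≠ 0) (hb₂ : b₂ ≠ 0)
    (h₁ : 0 < a₁ * a₂ → 0 < b₁ * a₂) (h₃ : 0 < a₃ * a₂ → 0 < b₂ * a₂) :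
    signChange A b₁ + signChange b₁ b₂ + signChange b₂ B ≤
      signChange A a₁ + signChange a₁ a₂ + signChange a₂ a₃ + signChange a₃ B := by
  rw [mul_pos_iff_decide_eq ha₁ ha₂, mul_pos_iff_decide_eq hb₁ ha₂] at h₁
  rw [mul_pos_iff_decide_eq ha₃ ha₂, mul_pos_iff_decide_eq hb₂ ha₂] at h₃
  simp only [signChange_eq_toNat, *, ne_eq, not_false_eq_true]
  generalize decide (0 < A) = A' at *
  generalize decide (0 < a₁) = a₁' at *
  generalize decide (0 < a₂) = a₂' at *
  generalize decide (0 < a₃) = a₃' at *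
  generalize decide (0 < B) = B' at *
  generalize decide (0 < b₁) = b₁' at *
  generalize decide (0 < b₂) = b₂' at *
  revert A' a₁' a₂' a₃' B' b₁' b₂'
  decide

theorem stmt_12_general {n : ℕ} (hn : 5 ≤ n) (u : ZMod n → E3)
    (hpoly : IsSphericalPolygon u)
    (hsimple : IsSimple u)
    (hgp : GeneralPosition u)
    (hbal : IsBalanced u)
    (i : ZMod n)
    (hgood : IsSimple (eraseVertex u i)) :
    {j : ZMod (n - 1) | Inflection (eraseVertex u i) j}.ncard ≤
      {j : ZMod n | Inflection u j}.ncard := by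
  have hn₄ : 4 ≤ n := by omega
  rw [ncard_inflection_eraseVertex_eq u i hn₄, ncard_inflection_eq u i hn₄, add_le_add_iff_left]
  have hτ := hgp.relTurn_ne_zero i (by omega)
  exact signChange_replace_le (hτ _) (hτ _) (hτ _) (hτ _) (hτ _)
    (hgp.det3_relVertex_ne_zero i (by omega) (by omega) (by omega) (by omega))
    (hgp.det3_relVertex_ne_zero i (by omega) (by omega) (by omega) (by omega))
    (det3_relVertex_mul_relTurn_pos_left u i hn₄ hpoly hsimple hgp hbal hgood)
    (det3_relVertex_mul_relTurn_pos_right u i hn₄ hpoly hsimple hgp hbal hgood)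

/-- Deleting a good, nonessential vertex from a simple, balanced
spherical polygon with n ≥ 5 vertices in general position does not increase the
number of spherical inflections. -/
theorem stmt_12 {n : ℕ} (hn : 5 ≤ n) (u : ZMod n → E3)
    (hpoly : IsSphericalPolygon u)
    (hsimple : IsSimple u)
    (hgp : GeneralPosition u)
    (hbal : IsBalanced u)
    (i : ZMod n)
    (hgood : IsSimple (eraseVertex u i))
    (hness : IsBalanced (eraseVertex u i)) :
    {j : ZMod (n - 1) | Inflection (eraseVertex u i) j}.ncard ≤
      {j : ZMod n | Inflection u j}.ncard :=
  stmt_12_general hn u hpoly hsimple hgp hbal i hgood
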